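/- Let p > 2 and let ω ∈ L¹(ℍ) ∩ L^p(ℍ) be nonnegative. Then there exists a constant C > 0, depending only on p, such that for every x = (x₁,x₂) ∈ ℝ² with x₂ ≥ 0, the velocity u(x) = ∫_ℍ K(x,y) ω(y) dy satisfies |u(x)| ≤ C · ‖ω‖_{L^p(ℍ)}^{p′/2} · ‖ω‖_{L¹(ℍ)}^{1 − p′/2}. -/

import Mathlib

open MeasureTheory Set
open scoped ENNReal NNReal

/-- The Euclidean norm on `ℝ × ℝ`. -/
noncomputable def nrm (z : ℝ × ℝ) : ℝ := Real.sqrt (z.1 ^ 2 + z.2 ^ 2)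

/-- The upper half-plane `ℍ = {x ∈ ℝ² : x₂ > 0}`. -/
def Hplane : Set (ℝ × ℝ) := {x | 0 < x.2}

/-- Reflection `x̄ = (x₁, -x₂)`. -/
def pbar (z : ℝ × ℝ) : ℝ × ℝ := (z.1, -z.2)

/-- Perpendicular vector `z^⊥ = (-z₂, z₁)`. -/
def perp (z : ℝ × ℝ) : ℝ × ℝ := (-z.2, z.1)

/-- The half-plane Biot–Savart kernel
`K(x,y) = (x-y)^⊥/(2π|x-y|²) - (x-ȳ)^⊥/(2π|x-ȳ|²)`. -/
noncomputable def Kker (x y : ℝ × ℝ) : ℝ × ℝ :=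
  (2 * Real.pi * nrm (x - y) ^ 2)⁻¹ • perp (x - y) -
    (2 * Real.pi * nrm (x - pbar y) ^ 2)⁻¹ • perp (x - pbar y)

noncomputable def LF : (ℝ × ℝ) →L[ℝ] EuclideanSpace ℝ (Fin 2) :=
  ((EuclideanSpace.equiv (Fin 2) ℝ).symm : (Fin 2 → ℝ) →L[ℝ] EuclideanSpace ℝ (Fin 2)).comp
    (ContinuousLinearMap.pi ![ContinuousLinearMap.fst ℝ ℝ ℝ, ContinuousLinearMap.snd ℝ ℝ ℝ])

lemma nrm_eq (z : ℝ × ℝ) : nrm z = ‖LF z‖ := by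
  simp [nrm, LF, EuclideanSpace.norm_eq, Fin.sum_univ_two, Real.norm_eq_abs, sq_abs]

lemma nrm_nonneg (z : ℝ × ℝ) : 0 ≤ nrm z := Real.sqrt_nonneg _

lemma nrm_pos {z : ℝ × ℝ} (h : z ≠ 0) : 0 < nrm z := by
  rw [nrm, Real.sqrt_pos]
  have h2 : z.1 ≠ 0 ∨ z.2 ≠ 0 := by
    by_contra hc
    push_neg at hc
    exact h (Prod.ext hc.1 hc.2)
  rcases h2 with h2 | h2 <;> nlinarith [sq_nonneg z.1, sq_nonneg z.2, pow_pos (abs_pos.mpr h2) 2, sq_abs z.1, sq_abs z.2]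

lemma nrm_smul (c : ℝ) (z : ℝ × ℝ) : nrm (c • z) = |c| * nrm z := by
  rw [nrm_eq, nrm_eq, _root_.map_smul, norm_smul, Real.norm_eq_abs]

lemma nrm_perp (z : ℝ × ℝ) : nrm (perp z) = nrm z := by
  simp [nrm, perp, add_comm]

lemma nrm_sub_le (a b : ℝ × ℝ) : nrm (a - b) ≤ nrm a + nrm b := by
  rw [nrm_eq, nrm_eq, nrm_eq, map_sub]; exact norm_sub_le _ _

lemma nrm_continuous : Continuous nrm := by
  rw [show nrm = fun z => ‖LF z‖ from funext nrm_eq]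
  exact LF.continuous.norm

/-- kernel bound -/
lemma Kker_bound {x y : ℝ × ℝ} (hx : 0 ≤ x.2) (hy : 0 < y.2) (hxy : y ≠ x) :
    nrm (Kker x y) ≤ (Real.pi * nrm (x - y))⁻¹ := by
  have pi_pos := Real.pi_pos
  have hd : 0 < nrm (x - y) := nrm_pos (sub_ne_zero.mpr (Ne.symm hxy))
  have he0 : x - pbar y ≠ 0 := by
    intro h
    have : x.2 + y.2 = 0 := by
      have := congrArg Prod.snd h
      simpa [pbar, sub_eq_zero, sub_neg_eq_add] using this
    linarith
  have he : 0 < nrm (x - pbar y) := nrm_pos he0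
  have hde : nrm (x - y) ≤ nrm (x - pbar y) := by
    unfold nrm pbar
    apply Real.sqrt_le_sqrt
    simp only [Prod.fst_sub, Prod.snd_sub]
    nlinarith [sq_nonneg (x.2 - y.2)]
  have h1 : nrm ((2 * Real.pi * nrm (x - y) ^ 2)⁻¹ • perp (x - y))
      = (2 * Real.pi * nrm (x - y))⁻¹ := by
    rw [nrm_smul, nrm_perp, abs_of_nonneg (by positivity)]
    field_simp
  have h2 : nrm ((2 * Real.pi * nrm (x - pbar y) ^ 2)⁻¹ • perp (x - pbar y))
      = (2 * Real.pi * nrm (x - pbar y))⁻¹ := by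
    rw [nrm_smul, nrm_perp, abs_of_nonneg (by positivity)]
    field_simp
  calc nrm (Kker x y) ≤ (2 * Real.pi * nrm (x - y))⁻¹ + (2 * Real.pi * nrm (x - pbar y))⁻¹ := by
        rw [← h1, ← h2]; exact nrm_sub_le _ _
    _ ≤ (2 * Real.pi * nrm (x - y))⁻¹ + (2 * Real.pi * nrm (x - y))⁻¹ := by
        gcongr
    _ = (Real.pi * nrm (x - y))⁻¹ := by field_simp; ring

noncomputable def gfun (q t : ℝ) : ℝ := |t| ^ (-(q/2))

lemma gfun_nonneg (q t : ℝ) : 0 ≤ gfun q t := Real.rpow_nonneg (abs_nonneg t) _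

noncomputable def Ffun (q R : ℝ) : ℝ → ℝ := (Ioc (-R) R).indicator (gfun q)

lemma Ffun_nonneg (q R t : ℝ) : 0 ≤ Ffun q R t :=
  Set.indicator_nonneg (fun t _ => gfun_nonneg q t) t

lemma gfun_measurable (q : ℝ) : Measurable (gfun q) := by
  unfold gfun
  fun_prop

lemma oneD {q R : ℝ} (hq1 : 1 < q) (hq2 : q < 2) (hR : 0 < R) :
    Integrable (Ffun q R) ∧ ∫ t, Ffun q R t = 2 / (1 - q/2) * R ^ (1 - q/2) := by
  have hs : (-1 : ℝ) < -(q/2) := by linarith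
  have h0R : IntervalIntegrable (gfun q) volume 0 R := by
    rw [intervalIntegrable_iff_integrableOn_Ioc_of_le hR.le]
    apply (intervalIntegral.intervalIntegrable_rpow' (a := 0) (b := R) hs).1.congr_fun
    · intro t ht
      rw [gfun, abs_of_pos ht.1]
    · exact measurableSet_Ioc
  have hneg : IntervalIntegrable (gfun q) volume (-R) 0 := by
    have h := (IntervalIntegrable.iff_comp_neg (f := gfun q)).mp h0R
    rw [show (fun x => gfun q (-x)) = gfun q from funext fun t => by simp [gfun, abs_neg]] at h
    simpa using h.symm
  have hRR : IntervalIntegrable (gfun q) volume (-R) R :=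
    hneg.trans h0R
  have hint : Integrable (Ffun q R) := by
    rw [Ffun, integrable_indicator_iff measurableSet_Ioc]
    exact (intervalIntegrable_iff_integrableOn_Ioc_of_le (by linarith)).mp hRR
  refine ⟨hint, ?_⟩
  have hval0R : ∫ t in (0:ℝ)..R, gfun q t = R ^ (1 - q/2) / (1 - q/2) := by
    rw [intervalIntegral.integral_congr (g := fun t => t ^ (-(q/2)))]
    · rw [integral_rpow (Or.inl hs)]
      rw [Real.zero_rpow (by linarith)]
      norm_num
      rw [show -(q/2) + 1 = 1 - q/2 by ring]
    · intro t ht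
      rw [uIcc_of_le hR.le] at ht
      rcases eq_or_lt_of_le ht.1 with h | h
      · simp [gfun, ← h, Real.zero_rpow (show -(q/2) ≠ 0 by linarith)]
      · rw [gfun, abs_of_pos h]
  have hvalneg : ∫ t in (-R)..0, gfun q t = ∫ t in (0:ℝ)..R, gfun q t := by
    have he : (∫ t in (-R)..(0:ℝ), gfun q t) = ∫ t in (-R)..(0:ℝ), gfun q (-t) := by
      simp [gfun, abs_neg]
    rw [he, intervalIntegral.integral_comp_neg (fun t => gfun q t), neg_zero, neg_neg]
  rw [Ffun, integral_indicator measurableSet_Ioc,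
    ← intervalIntegral.integral_of_le (by linarith : -R ≤ R),
    ← intervalIntegral.integral_add_adjacent_intervals hneg h0R, hvalneg, hval0R]
  ring

noncomputable def bInd (x : ℝ × ℝ) (R : ℝ) (y : ℝ × ℝ) : ℝ :=
  if nrm (x - y) < R then (nrm (x - y))⁻¹ else 0

lemma bInd_nonneg (x : ℝ × ℝ) (R : ℝ) (y : ℝ × ℝ) : 0 ≤ bInd x R y := by
  unfold bInd
  split
  · exact inv_nonneg.mpr (nrm_nonneg _)
  · exact le_refl 0

lemma bInd_measurable (x : ℝ × ℝ) (R : ℝ) : Measurable (bInd x R) := by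
  unfold bInd
  have hc : Continuous fun y : ℝ × ℝ => nrm (x - y) :=
    nrm_continuous.comp (continuous_const.sub continuous_id)
  exact Measurable.ite (measurableSet_lt hc.measurable measurable_const)
    hc.measurable.inv measurable_const

lemma line_null (c : ℝ) : (volume : Measure (ℝ × ℝ)) {y : ℝ × ℝ | y.1 = c} = 0 := by
  have : {y : ℝ × ℝ | y.1 = c} = ({c} : Set ℝ) ×ˢ (univ : Set ℝ) := by
    ext y
    constructor
    · intro h; exact ⟨by simpa using h, trivial⟩
    · rintro ⟨h1, -⟩; simpa using h1
  rw [this, Measure.volume_eq_prod ℝ ℝ, Measure.prod_prod]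
  simp

lemma line_null' (c : ℝ) : (volume : Measure (ℝ × ℝ)) {y : ℝ × ℝ | y.2 = c} = 0 := by
  have : {y : ℝ × ℝ | y.2 = c} = (univ : Set ℝ) ×ˢ ({c} : Set ℝ) := by
    ext y
    constructor
    · intro h; exact ⟨trivial, by simpa using h⟩
    · rintro ⟨-, h2⟩; simpa using h2
  rw [this, Measure.volume_eq_prod ℝ ℝ, Measure.prod_prod]
  simp

lemma twoD {q R : ℝ} (hq1 : 1 < q) (hq2 : q < 2) (hR : 0 < R) (x : ℝ × ℝ) :
    Integrable (fun y => bInd x R y ^ q) ∧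
      ∫ y, bInd x R y ^ q ≤ (2 / (1 - q/2) * R ^ (1 - q/2)) ^ (2:ℕ) := by
  obtain ⟨hF, hFval⟩ := oneD hq1 hq2 hR
  set G : ℝ × ℝ → ℝ := fun y => Ffun q R (y.1 - x.1) * Ffun q R (y.2 - x.2) with hG
  have hF1 : Integrable (fun t => Ffun q R (t - x.1)) := hF.comp_sub_right x.1
  have hF2 : Integrable (fun t => Ffun q R (t - x.2)) := hF.comp_sub_right x.2
  have hGint : Integrable G := by
    have := (hF1.mul_prod hF2 : Integrable (fun z : ℝ × ℝ =>
      (fun t => Ffun q R (t - x.1)) z.1 * (fun t => Ffun q R (t - x.2)) z.2)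
        ((volume : Measure ℝ).prod volume))
    rwa [← Measure.volume_eq_prod ℝ ℝ] at this
  have hGval : ∫ y, G y = (2 / (1 - q/2) * R ^ (1 - q/2)) ^ (2:ℕ) := by
    rw [hG]
    rw [Measure.volume_eq_prod ℝ ℝ, integral_prod_mul (fun t => Ffun q R (t - x.1))
      (fun t => Ffun q R (t - x.2)), integral_sub_right_eq_self _ x.1,
      integral_sub_right_eq_self _ x.2, hFval, sq]
  have hptwise : ∀ y : ℝ × ℝ, y.1 ≠ x.1 → y.2 ≠ x.2 → bInd x R y ^ q ≤ G y := by
    intro y hy1 hy2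
    have hGnn : 0 ≤ G y := mul_nonneg (Ffun_nonneg _ _ _) (Ffun_nonneg _ _ _)
    by_cases h : nrm (x - y) < R
    · have hxy : x - y ≠ 0 := by
        intro hz
        apply hy1
        have := congrArg Prod.fst hz
        simp only [Prod.fst_sub, Prod.fst_zero] at this
        linarith
      have hd : 0 < nrm (x - y) := nrm_pos hxy
      have habs1 : |y.1 - x.1| ≤ nrm (x - y) := by
        rw [abs_sub_comm, nrm]
        calc |x.1 - y.1| = Real.sqrt ((x.1 - y.1) ^ 2) := (Real.sqrt_sq_eq_abs _).symm
          _ ≤ _ := Real.sqrt_le_sqrt (by simp only [Prod.fst_sub, Prod.snd_sub]; nlinarith [sq_nonneg (x.2 - y.2)])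
      have habs2 : |y.2 - x.2| ≤ nrm (x - y) := by
        rw [abs_sub_comm, nrm]
        calc |x.2 - y.2| = Real.sqrt ((x.2 - y.2) ^ 2) := (Real.sqrt_sq_eq_abs _).symm
          _ ≤ _ := Real.sqrt_le_sqrt (by simp only [Prod.fst_sub, Prod.snd_sub]; nlinarith [sq_nonneg (x.1 - y.1)])
      have hm1 : y.1 - x.1 ∈ Ioc (-R) R := by
        have := abs_lt.mp (lt_of_le_of_lt habs1 h)
        exact ⟨this.1, this.2.le⟩
      have hm2 : y.2 - x.2 ∈ Ioc (-R) R := by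
        have := abs_lt.mp (lt_of_le_of_lt habs2 h)
        exact ⟨this.1, this.2.le⟩
      have hGy : G y = gfun q (y.1 - x.1) * gfun q (y.2 - x.2) := by
        rw [hG]
        simp only [Ffun, indicator_of_mem hm1, indicator_of_mem hm2]
      have hb : bInd x R y = (nrm (x - y))⁻¹ := if_pos h
      have hd1 : (0:ℝ) < |y.1 - x.1| := abs_pos.mpr (sub_ne_zero.mpr hy1)
      have hd2 : (0:ℝ) < |y.2 - x.2| := abs_pos.mpr (sub_ne_zero.mpr hy2)
      have hsq : 0 < Real.sqrt (|y.1 - x.1| * |y.2 - x.2|) :=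
        Real.sqrt_pos.mpr (mul_pos hd1 hd2)
      have hkey : Real.sqrt (|y.1 - x.1| * |y.2 - x.2|) ≤ nrm (x - y) := by
        rw [nrm]
        apply Real.sqrt_le_sqrt
        simp only [Prod.fst_sub, Prod.snd_sub]
        nlinarith [sq_nonneg (|y.1 - x.1| - |y.2 - x.2|), sq_abs (y.1 - x.1), sq_abs (y.2 - x.2),
          sq_nonneg (x.1 - y.1), sq_nonneg (x.2 - y.2), abs_sub_comm y.1 x.1, abs_sub_comm y.2 x.2]
      calc bInd x R y ^ q = nrm (x - y) ^ (-q) := by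
            rw [hb, Real.inv_rpow (nrm_nonneg _), ← Real.rpow_neg (nrm_nonneg _)]
        _ ≤ Real.sqrt (|y.1 - x.1| * |y.2 - x.2|) ^ (-q) :=
            Real.rpow_le_rpow_of_nonpos hsq hkey (by linarith)
        _ = (|y.1 - x.1| * |y.2 - x.2|) ^ (-(q/2)) := by
            rw [Real.sqrt_eq_rpow, ← Real.rpow_mul (mul_nonneg hd1.le hd2.le)]
            norm_num
            ring_nf
        _ = G y := by
            rw [hGy, gfun, gfun, ← Real.mul_rpow (abs_nonneg _) (abs_nonneg _)]
    · have hb : bInd x R y = 0 := if_neg h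
      rw [hb, Real.zero_rpow (by linarith : q ≠ 0)]
      exact hGnn
  have hae : ∀ᵐ y : ℝ × ℝ, bInd x R y ^ q ≤ G y := by
    have h1 : ∀ᵐ y : ℝ × ℝ, y.1 ≠ x.1 := by
      rw [ae_iff]
      simpa using line_null x.1
    have h2 : ∀ᵐ y : ℝ × ℝ, y.2 ≠ x.2 := by
      rw [ae_iff]
      simpa using line_null' x.2
    filter_upwards [h1, h2] with y hy1 hy2 using hptwise y hy1 hy2
  have hmeas : Measurable fun y => bInd x R y ^ q :=
    (bInd_measurable x R).pow_const q
  have hint : Integrable (fun y => bInd x R y ^ q) := by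
    apply Integrable.mono' hGint hmeas.aestronglyMeasurable
    filter_upwards [hae] with y hy
    rwa [Real.norm_of_nonneg (Real.rpow_nonneg (bInd_nonneg x R y) q)]
  exact ⟨hint, hGval ▸ integral_mono_ae hint hGint hae⟩


/-- For `p > 2` and nonnegative `ω ∈ L¹(ℍ) ∩ Lᵖ(ℍ)`, the velocity
`u(x) = ∫_ℍ K(x,y) ω(y) dy` satisfies
`|u(x)| ≤ C ‖ω‖_{Lᵖ}^{p'/2} ‖ω‖_{L¹}^{1-p'/2}` for all `x` with `x₂ ≥ 0`,
with `C = C(p) > 0`. -/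
theorem stmt_2 (p : ℝ) (hp : 2 < p) :
    ∃ C : ℝ, 0 < C ∧
      ∀ ω : ℝ × ℝ → ℝ, (∀ y ∈ Hplane, 0 ≤ ω y) →
        IntegrableOn ω Hplane →
        IntegrableOn (fun y => ω y ^ p) Hplane →
        ∀ x : ℝ × ℝ, 0 ≤ x.2 →
          nrm (∫ y in Hplane, ω y • Kker x y) ≤
            C * ((∫ y in Hplane, ω y ^ p) ^ (1 / p)) ^ ((p / (p - 1)) / 2) *
              (∫ y in Hplane, ω y) ^ (1 - (p / (p - 1)) / 2) := by
  have hp1 : 1 < p := by linarith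
  set q := p / (p - 1) with hqdef
  have hpq : p.HolderConjugate q := Real.HolderConjugate.conjExponent hp1
  have hq1 : 1 < q := hpq.symm.lt
  have hq0 : 0 < q := by linarith
  have hq2 : q < 2 := by
    rw [hqdef, div_lt_iff₀ (by linarith)]
    linarith
  set cq : ℝ := 2 / (1 - q/2) with hcqdef
  have hcq : 0 < cq := by
    apply div_pos two_pos
    linarith
  set D : ℝ := (cq ^ (2:ℕ)) ^ (1/q) with hDdef
  have hD : 0 < D := Real.rpow_pos_of_pos (pow_pos hcq 2) _
  have hπ : (0:ℝ) < Real.pi := Real.pi_pos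
  refine ⟨Real.pi⁻¹ * (D + 1), by positivity, ?_⟩
  intro ω hω hω1 hωp x hx
  have hHm : MeasurableSet Hplane := measurableSet_lt measurable_const measurable_snd
  set μ := (volume : Measure (ℝ × ℝ)).restrict Hplane with hμdef
  set A := (∫ y in Hplane, ω y ^ p) ^ (1/p) with hAdef
  set B := ∫ y in Hplane, ω y with hBdef
  have hωae : 0 ≤ᵐ[μ] ω := ae_restrict_of_forall_mem hHm hω
  have hωpae : 0 ≤ᵐ[μ] fun y => ω y ^ p := by
    filter_upwards [hωae] with y hy using Real.rpow_nonneg hy p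
  have hA0 : 0 ≤ A := Real.rpow_nonneg (integral_nonneg_of_ae hωpae) _
  have hB0 : 0 ≤ B := integral_nonneg_of_ae hωae
  have hRHS0 : 0 ≤ Real.pi⁻¹ * (D + 1) * A ^ (q/2) * B ^ (1 - q/2) := by
    have := Real.rpow_nonneg hA0 (q/2)
    have := Real.rpow_nonneg hB0 (1 - q/2)
    positivity
  have hnrm0 : nrm 0 = 0 := by simp [nrm]
  by_cases hint : Integrable (fun y => ω y • Kker x y) μ
  swap
  · rw [show (∫ y in Hplane, ω y • Kker x y) = 0 from integral_undef hint, hnrm0]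
    exact hRHS0
  by_cases hB : B = 0
  · have hω0 : ω =ᵐ[μ] 0 := (integral_eq_zero_iff_of_nonneg_ae hωae hω1).mp hB
    have hz : ∫ y in Hplane, ω y • Kker x y = 0 := by
      rw [← integral_zero (ℝ × ℝ) (ℝ × ℝ) (μ := μ)]
      apply integral_congr_ae
      filter_upwards [hω0] with y hy
      simp [hy]
    rw [hz, hnrm0, hB, Real.zero_rpow (by intro h; rw [sub_eq_zero] at h; linarith), mul_zero]
  have hBpos : 0 < B := lt_of_le_of_ne hB0 (Ne.symm hB)
  have hApos : 0 < A := by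
    rcases lt_or_eq_of_le hA0 with h | h
    · exact h
    have hIp : ∫ y in Hplane, ω y ^ p = 0 := by
      by_contra hc
      have h2 : 0 < ∫ y in Hplane, ω y ^ p :=
        lt_of_le_of_ne (integral_nonneg_of_ae hωpae) (Ne.symm hc)
      exact absurd h.symm (ne_of_gt (Real.rpow_pos_of_pos h2 _))
    have hωp0 : (fun y => ω y ^ p) =ᵐ[μ] 0 :=
      (integral_eq_zero_iff_of_nonneg_ae hωpae hωp).mp hIp
    have hω0 : ω =ᵐ[μ] 0 := by
      filter_upwards [hωp0, hωae] with y hy hy0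
      simp only [Pi.zero_apply] at hy ⊢
      by_contra hc
      have : 0 < ω y := lt_of_le_of_ne hy0 (Ne.symm hc)
      exact absurd hy (ne_of_gt (Real.rpow_pos_of_pos this p))
    exact absurd (integral_congr_ae hω0) (by simpa [hBdef] using hB)
  set R := (B / A) ^ (q/2) with hRdef
  have hBA : 0 < B / A := div_pos hBpos hApos
  have hR : 0 < R := Real.rpow_pos_of_pos hBA _
  -- Memℒp facts
  have hp0' : ENNReal.ofReal p ≠ 0 := by
    simp only [ne_eq, ENNReal.ofReal_eq_zero, not_le]
    linarith
  have hq0' : ENNReal.ofReal q ≠ 0 := by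
    simp only [ne_eq, ENNReal.ofReal_eq_zero, not_le]
    linarith
  have hmemp : MemLp ω (ENNReal.ofReal p) μ := by
    refine (memLp_norm_rpow_iff hω1.aestronglyMeasurable hp0' ENNReal.ofReal_ne_top).mp ?_
    rw [ENNReal.toReal_ofReal (by linarith : (0:ℝ) ≤ p),
      ENNReal.div_self hp0' ENNReal.ofReal_ne_top, memLp_one_iff_integrable]
    apply hωp.congr
    filter_upwards [hωae] with y hy
    rw [Real.norm_of_nonneg hy]
  obtain ⟨hbq_int, hbq_val⟩ := twoD hq1 hq2 hR x
  have hbq_intμ : Integrable (fun y => bInd x R y ^ q) μ := hbq_int.restrict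
  have hmemq : MemLp (bInd x R) (ENNReal.ofReal q) μ := by
    refine (memLp_norm_rpow_iff ((bInd_measurable x R).aestronglyMeasurable) hq0'
      ENNReal.ofReal_ne_top).mp ?_
    rw [ENNReal.toReal_ofReal (by linarith : (0:ℝ) ≤ q),
      ENNReal.div_self hq0' ENNReal.ofReal_ne_top, memLp_one_iff_integrable]
    apply hbq_intμ.congr
    apply Filter.Eventually.of_forall
    intro y
    simp only [Real.norm_of_nonneg (bInd_nonneg x R y)]
  have hHolder := integral_mul_le_Lp_mul_Lq_of_nonneg hpq hωae
    (Filter.Eventually.of_forall fun y => bInd_nonneg x R y) hmemp hmemq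
  have hmul : Integrable (fun y => ω y * bInd x R y) μ := by
    have hpqr : (1:ℝ≥0∞)/1 = 1/ENNReal.ofReal p + 1/ENNReal.ofReal q := by
      have h11 : (1:ℝ≥0∞)/1 = 1 := by simp
      rw [h11, one_div, one_div]
      rw [← ENNReal.ofReal_inv_of_pos (by linarith : (0:ℝ) < p),
        ← ENNReal.ofReal_inv_of_pos (by linarith : (0:ℝ) < q),
        ← ENNReal.ofReal_add (by positivity) (by positivity)]
      rw [show p⁻¹ + q⁻¹ = 1 from by
        have := hpq.inv_add_inv_eq_one
        linarith, ENNReal.ofReal_one]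
    haveI : ENNReal.HolderTriple (ENNReal.ofReal p) (ENNReal.ofReal q) 1 :=
      ⟨by simpa [one_div] using hpqr.symm⟩
    have := MemLp.smul (φ := ω) (r := 1) hmemq hmemp
    rw [memLp_one_iff_integrable] at this
    apply this.congr
    apply Filter.Eventually.of_forall
    intro y
    simp [Pi.smul_apply', smul_eq_mul]
  -- bound on the q-integral
  have hq_half : (0:ℝ) < 1 - q/2 := by linarith
  have hXbound : (∫ y, bInd x R y ^ q ∂μ) ^ (1/q) ≤ D * R ^ ((2-q) * (1/q)) := by
    have h1 : ∫ y, bInd x R y ^ q ∂μ ≤ (cq * R ^ (1 - q/2)) ^ (2:ℕ) := by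
      refine le_trans ?_ hbq_val
      exact setIntegral_le_integral hbq_int
        (Filter.Eventually.of_forall fun y => Real.rpow_nonneg (bInd_nonneg x R y) q)
    have h2 := Real.rpow_le_rpow (integral_nonneg fun y => Real.rpow_nonneg (bInd_nonneg x R y) q)
      h1 (by positivity : (0:ℝ) ≤ 1/q)
    refine le_trans h2 (le_of_eq ?_)
    have hRp : (0:ℝ) ≤ R ^ (1 - q/2) := (Real.rpow_pos_of_pos hR _).le
    rw [mul_pow, ← Real.rpow_natCast (R ^ (1 - q/2)) 2, ← Real.rpow_mul hR.le,
      Real.mul_rpow (by positivity) (by positivity), ← Real.rpow_mul hR.le]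
    norm_num
    rw [hDdef]
    ring_nf
  -- main chain
  set bnd : (ℝ × ℝ) → ℝ := fun y => Real.pi⁻¹ * (ω y * bInd x R y + ω y * R⁻¹) with hbnddef
  have hbnd_int : Integrable bnd μ := (hmul.add (hω1.mul_const R⁻¹)).const_mul _
  have hchain : nrm (∫ y in Hplane, ω y • Kker x y) ≤ ∫ y, bnd y ∂μ := by
    rw [nrm_eq, ← ContinuousLinearMap.integral_comp_comm LF hint]
    refine le_trans (norm_integral_le_integral_norm _) ?_
    apply integral_mono_of_nonneg (Filter.Eventually.of_forall fun y => norm_nonneg _) hbnd_int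
    have hxnull : ∀ᵐ y ∂μ, y ≠ x := by
      apply ae_restrict_of_ae
      rw [ae_iff]
      refine measure_mono_null ?_ (line_null x.1)
      intro y hy
      simp only [mem_setOf_eq, not_not] at hy ⊢
      rw [hy]
    filter_upwards [hωae, ae_restrict_mem hHm, hxnull] with y hy0 hyH hyx
    have hK := Kker_bound hx hyH hyx
    have hd : 0 < nrm (x - y) := nrm_pos (sub_ne_zero.mpr (Ne.symm hyx))
    have hinv : (nrm (x - y))⁻¹ ≤ bInd x R y + R⁻¹ := by
      by_cases h : nrm (x - y) < R
      · rw [bInd, if_pos h]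
        exact le_add_of_nonneg_right (by positivity)
      · rw [bInd, if_neg h, zero_add]
        push_neg at h
        exact inv_anti₀ hR h
    calc ‖LF (ω y • Kker x y)‖ = ω y * nrm (Kker x y) := by
          rw [← nrm_eq, nrm_smul, abs_of_nonneg hy0]
      _ ≤ ω y * (Real.pi * nrm (x - y))⁻¹ := mul_le_mul_of_nonneg_left hK hy0
      _ = Real.pi⁻¹ * (ω y * (nrm (x - y))⁻¹) := by rw [mul_inv]; ring
      _ ≤ bnd y := by
          rw [hbnddef]
          have h2 : ω y * (nrm (x - y))⁻¹ ≤ ω y * (bInd x R y + R⁻¹) :=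
            mul_le_mul_of_nonneg_left hinv hy0
          have h3 : (0:ℝ) ≤ Real.pi⁻¹ := by positivity
          calc Real.pi⁻¹ * (ω y * (nrm (x - y))⁻¹) ≤ Real.pi⁻¹ * (ω y * (bInd x R y + R⁻¹)) :=
                mul_le_mul_of_nonneg_left h2 h3
            _ = Real.pi⁻¹ * (ω y * bInd x R y + ω y * R⁻¹) := by ring
  have hbndval : ∫ y, bnd y ∂μ
      = Real.pi⁻¹ * ((∫ y, ω y * bInd x R y ∂μ) + R⁻¹ * B) := by
    rw [hbnddef]
    rw [integral_const_mul, integral_add hmul (hω1.mul_const R⁻¹), integral_mul_const]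
    rw [hBdef]
    ring
  have hS1 : ∫ y, ω y * bInd x R y ∂μ ≤ A * (D * R ^ ((2-q) * (1/q))) := by
    refine le_trans hHolder ?_
    have : (∫ y, ω y ^ p ∂μ) ^ (1/p) = A := rfl
    rw [this]
    exact mul_le_mul_of_nonneg_left hXbound hA0
  -- rpow algebra
  have hexp1 : R ^ ((2-q) * (1/q)) = (B/A) ^ (1 - q/2) := by
    rw [hRdef, ← Real.rpow_mul hBA.le]
    congr 1
    field_simp
  have hfinal1 : A * (B/A) ^ (1 - q/2) = A ^ (q/2) * B ^ (1 - q/2) := by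
    rw [Real.div_rpow hB0 hApos.le]
    have hAe : (0:ℝ) < A ^ (1 - q/2) := Real.rpow_pos_of_pos hApos _
    have h1 : A ^ (q/2) = A / A ^ (1 - q/2) := by
      rw [eq_div_iff (ne_of_gt hAe), ← Real.rpow_add hApos, ← Real.rpow_one A]
      ring_nf
      simp [Real.rpow_one]
    rw [h1]
    field_simp
  have hfinal2 : R⁻¹ * B = A ^ (q/2) * B ^ (1 - q/2) := by
    rw [hRdef, Real.div_rpow hB0 hApos.le]
    have hBq : (0:ℝ) < B ^ (q/2) := Real.rpow_pos_of_pos hBpos _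
    have hAq : (0:ℝ) < A ^ (q/2) := Real.rpow_pos_of_pos hApos _
    have h1 : B ^ (1 - q/2) = B / B ^ (q/2) := by
      rw [eq_div_iff (ne_of_gt hBq), ← Real.rpow_add hBpos, ← Real.rpow_one B]
      ring_nf
      simp [Real.rpow_one]
    rw [h1, inv_div]
    field_simp
  calc nrm (∫ y in Hplane, ω y • Kker x y) ≤ ∫ y, bnd y ∂μ := hchain
    _ = Real.pi⁻¹ * ((∫ y, ω y * bInd x R y ∂μ) + R⁻¹ * B) := hbndval
    _ ≤ Real.pi⁻¹ * ((A * (D * R ^ ((2-q) * (1/q)))) + R⁻¹ * B) := by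
        apply mul_le_mul_of_nonneg_left _ (by positivity)
        exact add_le_add_left hS1 _
    _ = Real.pi⁻¹ * (D + 1) * A ^ (q/2) * B ^ (1 - q/2) := by
        rw [hexp1, hfinal2,
          show A * (D * (B/A) ^ (1 - q/2)) = D * (A * (B/A) ^ (1 - q/2)) from by ring, hfinal1]
        ring
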